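/- Let V be an n-dimensional complex inner product space and f a Hermitian endomorphism of V ⊗ V satisfying σ ∘ f = f = f ∘ σ (where σ is the swap operator) and tr₁₃ f = tr₁₄ f = tr₂₃ f (all partial traces equal, call the common value r as an endomorphism of V). Then tr((f ⊗ f) ∘ Π_4) = (1/24)(4|f|² + 16|r|² + 4(tr f)²), where Π_4 is the symmetrization projector on V^{⊗4} and the norms are Frobenius norms. -/

import Mathlib

open Matrix
open scoped Matrix

def mk4 (v w : Fin 4 → Fin 4) (h1 : Function.LeftInverse w v) (h2 : Function.RightInverse w v) :
    Equiv.Perm (Fin 4) := ⟨v, w, h1, h2⟩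

def q0123 : Equiv.Perm (Fin 4) := mk4 ![0,1,2,3] ![0,1,2,3] (by decide) (by decide)
def q0132 : Equiv.Perm (Fin 4) := mk4 ![0,1,3,2] ![0,1,3,2] (by decide) (by decide)
def q0213 : Equiv.Perm (Fin 4) := mk4 ![0,2,1,3] ![0,2,1,3] (by decide) (by decide)
def q0231 : Equiv.Perm (Fin 4) := mk4 ![0,2,3,1] ![0,3,1,2] (by decide) (by decide)
def q0312 : Equiv.Perm (Fin 4) := mk4 ![0,3,1,2] ![0,2,3,1] (by decide) (by decide)
def q0321 : Equiv.Perm (Fin 4) := mk4 ![0,3,2,1] ![0,3,2,1] (by decide) (by decide)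
def q1023 : Equiv.Perm (Fin 4) := mk4 ![1,0,2,3] ![1,0,2,3] (by decide) (by decide)
def q1032 : Equiv.Perm (Fin 4) := mk4 ![1,0,3,2] ![1,0,3,2] (by decide) (by decide)
def q1203 : Equiv.Perm (Fin 4) := mk4 ![1,2,0,3] ![2,0,1,3] (by decide) (by decide)
def q1230 : Equiv.Perm (Fin 4) := mk4 ![1,2,3,0] ![3,0,1,2] (by decide) (by decide)
def q1302 : Equiv.Perm (Fin 4) := mk4 ![1,3,0,2] ![2,0,3,1] (by decide) (by decide)
def q1320 : Equiv.Perm (Fin 4) := mk4 ![1,3,2,0] ![3,0,2,1] (by decide) (by decide)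
def q2013 : Equiv.Perm (Fin 4) := mk4 ![2,0,1,3] ![1,2,0,3] (by decide) (by decide)
def q2031 : Equiv.Perm (Fin 4) := mk4 ![2,0,3,1] ![1,3,0,2] (by decide) (by decide)
def q2103 : Equiv.Perm (Fin 4) := mk4 ![2,1,0,3] ![2,1,0,3] (by decide) (by decide)
def q2130 : Equiv.Perm (Fin 4) := mk4 ![2,1,3,0] ![3,1,0,2] (by decide) (by decide)
def q2301 : Equiv.Perm (Fin 4) := mk4 ![2,3,0,1] ![2,3,0,1] (by decide) (by decide)
def q2310 : Equiv.Perm (Fin 4) := mk4 ![2,3,1,0] ![3,2,0,1] (by decide) (by decide)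
def q3012 : Equiv.Perm (Fin 4) := mk4 ![3,0,1,2] ![1,2,3,0] (by decide) (by decide)
def q3021 : Equiv.Perm (Fin 4) := mk4 ![3,0,2,1] ![1,3,2,0] (by decide) (by decide)
def q3102 : Equiv.Perm (Fin 4) := mk4 ![3,1,0,2] ![2,1,3,0] (by decide) (by decide)
def q3120 : Equiv.Perm (Fin 4) := mk4 ![3,1,2,0] ![3,1,2,0] (by decide) (by decide)
def q3201 : Equiv.Perm (Fin 4) := mk4 ![3,2,0,1] ![2,3,1,0] (by decide) (by decide)
def q3210 : Equiv.Perm (Fin 4) := mk4 ![3,2,1,0] ![3,2,1,0] (by decide) (by decide)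

lemma q0123_inv_0 : q0123⁻¹ (0 : Fin 4) = (0 : Fin 4) := rfl
lemma q0123_inv_1 : q0123⁻¹ (1 : Fin 4) = (1 : Fin 4) := rfl
lemma q0123_inv_2 : q0123⁻¹ (2 : Fin 4) = (2 : Fin 4) := rfl
lemma q0123_inv_3 : q0123⁻¹ (3 : Fin 4) = (3 : Fin 4) := rfl
lemma q0132_inv_0 : q0132⁻¹ (0 : Fin 4) = (0 : Fin 4) := rfl
lemma q0132_inv_1 : q0132⁻¹ (1 : Fin 4) = (1 : Fin 4) := rfl
lemma q0132_inv_2 : q0132⁻¹ (2 : Fin 4) = (3 : Fin 4) := rfl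
lemma q0132_inv_3 : q0132⁻¹ (3 : Fin 4) = (2 : Fin 4) := rfl
lemma q0213_inv_0 : q0213⁻¹ (0 : Fin 4) = (0 : Fin 4) := rfl
lemma q0213_inv_1 : q0213⁻¹ (1 : Fin 4) = (2 : Fin 4) := rfl
lemma q0213_inv_2 : q0213⁻¹ (2 : Fin 4) = (1 : Fin 4) := rfl
lemma q0213_inv_3 : q0213⁻¹ (3 : Fin 4) = (3 : Fin 4) := rfl
lemma q0231_inv_0 : q0231⁻¹ (0 : Fin 4) = (0 : Fin 4) := rfl
lemma q0231_inv_1 : q0231⁻¹ (1 : Fin 4) = (3 : Fin 4) := rfl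
lemma q0231_inv_2 : q0231⁻¹ (2 : Fin 4) = (1 : Fin 4) := rfl
lemma q0231_inv_3 : q0231⁻¹ (3 : Fin 4) = (2 : Fin 4) := rfl
lemma q0312_inv_0 : q0312⁻¹ (0 : Fin 4) = (0 : Fin 4) := rfl
lemma q0312_inv_1 : q0312⁻¹ (1 : Fin 4) = (2 : Fin 4) := rfl
lemma q0312_inv_2 : q0312⁻¹ (2 : Fin 4) = (3 : Fin 4) := rfl
lemma q0312_inv_3 : q0312⁻¹ (3 : Fin 4) = (1 : Fin 4) := rfl
lemma q0321_inv_0 : q0321⁻¹ (0 : Fin 4) = (0 : Fin 4) := rfl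
lemma q0321_inv_1 : q0321⁻¹ (1 : Fin 4) = (3 : Fin 4) := rfl
lemma q0321_inv_2 : q0321⁻¹ (2 : Fin 4) = (2 : Fin 4) := rfl
lemma q0321_inv_3 : q0321⁻¹ (3 : Fin 4) = (1 : Fin 4) := rfl
lemma q1023_inv_0 : q1023⁻¹ (0 : Fin 4) = (1 : Fin 4) := rfl
lemma q1023_inv_1 : q1023⁻¹ (1 : Fin 4) = (0 : Fin 4) := rfl
lemma q1023_inv_2 : q1023⁻¹ (2 : Fin 4) = (2 : Fin 4) := rfl
lemma q1023_inv_3 : q1023⁻¹ (3 : Fin 4) = (3 : Fin 4) := rfl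
lemma q1032_inv_0 : q1032⁻¹ (0 : Fin 4) = (1 : Fin 4) := rfl
lemma q1032_inv_1 : q1032⁻¹ (1 : Fin 4) = (0 : Fin 4) := rfl
lemma q1032_inv_2 : q1032⁻¹ (2 : Fin 4) = (3 : Fin 4) := rfl
lemma q1032_inv_3 : q1032⁻¹ (3 : Fin 4) = (2 : Fin 4) := rfl
lemma q1203_inv_0 : q1203⁻¹ (0 : Fin 4) = (2 : Fin 4) := rfl
lemma q1203_inv_1 : q1203⁻¹ (1 : Fin 4) = (0 : Fin 4) := rfl
lemma q1203_inv_2 : q1203⁻¹ (2 : Fin 4) = (1 : Fin 4) := rfl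
lemma q1203_inv_3 : q1203⁻¹ (3 : Fin 4) = (3 : Fin 4) := rfl
lemma q1230_inv_0 : q1230⁻¹ (0 : Fin 4) = (3 : Fin 4) := rfl
lemma q1230_inv_1 : q1230⁻¹ (1 : Fin 4) = (0 : Fin 4) := rfl
lemma q1230_inv_2 : q1230⁻¹ (2 : Fin 4) = (1 : Fin 4) := rfl
lemma q1230_inv_3 : q1230⁻¹ (3 : Fin 4) = (2 : Fin 4) := rfl
lemma q1302_inv_0 : q1302⁻¹ (0 : Fin 4) = (2 : Fin 4) := rfl
lemma q1302_inv_1 : q1302⁻¹ (1 : Fin 4) = (0 : Fin 4) := rfl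
lemma q1302_inv_2 : q1302⁻¹ (2 : Fin 4) = (3 : Fin 4) := rfl
lemma q1302_inv_3 : q1302⁻¹ (3 : Fin 4) = (1 : Fin 4) := rfl
lemma q1320_inv_0 : q1320⁻¹ (0 : Fin 4) = (3 : Fin 4) := rfl
lemma q1320_inv_1 : q1320⁻¹ (1 : Fin 4) = (0 : Fin 4) := rfl
lemma q1320_inv_2 : q1320⁻¹ (2 : Fin 4) = (2 : Fin 4) := rfl
lemma q1320_inv_3 : q1320⁻¹ (3 : Fin 4) = (1 : Fin 4) := rfl
lemma q2013_inv_0 : q2013⁻¹ (0 : Fin 4) = (1 : Fin 4) := rfl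
lemma q2013_inv_1 : q2013⁻¹ (1 : Fin 4) = (2 : Fin 4) := rfl
lemma q2013_inv_2 : q2013⁻¹ (2 : Fin 4) = (0 : Fin 4) := rfl
lemma q2013_inv_3 : q2013⁻¹ (3 : Fin 4) = (3 : Fin 4) := rfl
lemma q2031_inv_0 : q2031⁻¹ (0 : Fin 4) = (1 : Fin 4) := rfl
lemma q2031_inv_1 : q2031⁻¹ (1 : Fin 4) = (3 : Fin 4) := rfl
lemma q2031_inv_2 : q2031⁻¹ (2 : Fin 4) = (0 : Fin 4) := rfl
lemma q2031_inv_3 : q2031⁻¹ (3 : Fin 4) = (2 : Fin 4) := rfl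
lemma q2103_inv_0 : q2103⁻¹ (0 : Fin 4) = (2 : Fin 4) := rfl
lemma q2103_inv_1 : q2103⁻¹ (1 : Fin 4) = (1 : Fin 4) := rfl
lemma q2103_inv_2 : q2103⁻¹ (2 : Fin 4) = (0 : Fin 4) := rfl
lemma q2103_inv_3 : q2103⁻¹ (3 : Fin 4) = (3 : Fin 4) := rfl
lemma q2130_inv_0 : q2130⁻¹ (0 : Fin 4) = (3 : Fin 4) := rfl
lemma q2130_inv_1 : q2130⁻¹ (1 : Fin 4) = (1 : Fin 4) := rfl
lemma q2130_inv_2 : q2130⁻¹ (2 : Fin 4) = (0 : Fin 4) := rfl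
lemma q2130_inv_3 : q2130⁻¹ (3 : Fin 4) = (2 : Fin 4) := rfl
lemma q2301_inv_0 : q2301⁻¹ (0 : Fin 4) = (2 : Fin 4) := rfl
lemma q2301_inv_1 : q2301⁻¹ (1 : Fin 4) = (3 : Fin 4) := rfl
lemma q2301_inv_2 : q2301⁻¹ (2 : Fin 4) = (0 : Fin 4) := rfl
lemma q2301_inv_3 : q2301⁻¹ (3 : Fin 4) = (1 : Fin 4) := rfl
lemma q2310_inv_0 : q2310⁻¹ (0 : Fin 4) = (3 : Fin 4) := rfl
lemma q2310_inv_1 : q2310⁻¹ (1 : Fin 4) = (2 : Fin 4) := rfl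
lemma q2310_inv_2 : q2310⁻¹ (2 : Fin 4) = (0 : Fin 4) := rfl
lemma q2310_inv_3 : q2310⁻¹ (3 : Fin 4) = (1 : Fin 4) := rfl
lemma q3012_inv_0 : q3012⁻¹ (0 : Fin 4) = (1 : Fin 4) := rfl
lemma q3012_inv_1 : q3012⁻¹ (1 : Fin 4) = (2 : Fin 4) := rfl
lemma q3012_inv_2 : q3012⁻¹ (2 : Fin 4) = (3 : Fin 4) := rfl
lemma q3012_inv_3 : q3012⁻¹ (3 : Fin 4) = (0 : Fin 4) := rfl
lemma q3021_inv_0 : q3021⁻¹ (0 : Fin 4) = (1 : Fin 4) := rfl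
lemma q3021_inv_1 : q3021⁻¹ (1 : Fin 4) = (3 : Fin 4) := rfl
lemma q3021_inv_2 : q3021⁻¹ (2 : Fin 4) = (2 : Fin 4) := rfl
lemma q3021_inv_3 : q3021⁻¹ (3 : Fin 4) = (0 : Fin 4) := rfl
lemma q3102_inv_0 : q3102⁻¹ (0 : Fin 4) = (2 : Fin 4) := rfl
lemma q3102_inv_1 : q3102⁻¹ (1 : Fin 4) = (1 : Fin 4) := rfl
lemma q3102_inv_2 : q3102⁻¹ (2 : Fin 4) = (3 : Fin 4) := rfl
lemma q3102_inv_3 : q3102⁻¹ (3 : Fin 4) = (0 : Fin 4) := rfl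
lemma q3120_inv_0 : q3120⁻¹ (0 : Fin 4) = (3 : Fin 4) := rfl
lemma q3120_inv_1 : q3120⁻¹ (1 : Fin 4) = (1 : Fin 4) := rfl
lemma q3120_inv_2 : q3120⁻¹ (2 : Fin 4) = (2 : Fin 4) := rfl
lemma q3120_inv_3 : q3120⁻¹ (3 : Fin 4) = (0 : Fin 4) := rfl
lemma q3201_inv_0 : q3201⁻¹ (0 : Fin 4) = (2 : Fin 4) := rfl
lemma q3201_inv_1 : q3201⁻¹ (1 : Fin 4) = (3 : Fin 4) := rfl
lemma q3201_inv_2 : q3201⁻¹ (2 : Fin 4) = (1 : Fin 4) := rfl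
lemma q3201_inv_3 : q3201⁻¹ (3 : Fin 4) = (0 : Fin 4) := rfl
lemma q3210_inv_0 : q3210⁻¹ (0 : Fin 4) = (3 : Fin 4) := rfl
lemma q3210_inv_1 : q3210⁻¹ (1 : Fin 4) = (2 : Fin 4) := rfl
lemma q3210_inv_2 : q3210⁻¹ (2 : Fin 4) = (1 : Fin 4) := rfl
lemma q3210_inv_3 : q3210⁻¹ (3 : Fin 4) = (0 : Fin 4) := rfl

lemma huniv : (Finset.univ : Finset (Equiv.Perm (Fin 4))) = {q0123, q0132, q0213, q0231, q0312, q0321, q1023, q1032, q1203, q1230, q1302, q1320, q2013, q2031, q2103, q2130, q2301, q2310, q3012, q3021, q3102, q3120, q3201, q3210} := by decide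

lemma perm_sum {M : Type*} [AddCommMonoid M] (g : Equiv.Perm (Fin 4) → M) :
    ∑ σ : Equiv.Perm (Fin 4), g σ = g q0123 + g q0132 + g q0213 + g q0231 + g q0312 + g q0321 + g q1023 + g q1032 + g q1203 + g q1230 + g q1302 + g q1320 + g q2013 + g q2031 + g q2103 + g q2130 + g q2301 + g q2310 + g q3012 + g q3021 + g q3102 + g q3120 + g q3201 + g q3210 := by
  rw [huniv]
  rw [Finset.sum_insert (by decide), Finset.sum_insert (by decide), Finset.sum_insert (by decide), Finset.sum_insert (by decide), Finset.sum_insert (by decide), Finset.sum_insert (by decide), Finset.sum_insert (by decide), Finset.sum_insert (by decide), Finset.sum_insert (by decide), Finset.sum_insert (by decide), Finset.sum_insert (by decide), Finset.sum_insert (by decide), Finset.sum_insert (by decide), Finset.sum_insert (by decide), Finset.sum_insert (by decide), Finset.sum_insert (by decide), Finset.sum_insert (by decide), Finset.sum_insert (by decide), Finset.sum_insert (by decide), Finset.sum_insert (by decide), Finset.sum_insert (by decide), Finset.sum_insert (by decide), Finset.sum_insert (by decide), Finset.sum_singleton]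
  simp only [add_assoc]

variable {n : ℕ}

lemma pisum (g : Fin n → Fin n → Fin n → Fin n → ℂ) :
    ∑ a : Fin 4 → Fin n, g (a 0) (a 1) (a 2) (a 3)
      = ∑ w, ∑ x, ∑ y, ∑ z, g w x y z := by
  let e : (Fin n × Fin n × Fin n × Fin n) ≃ (Fin 4 → Fin n) :=
    { toFun := fun p => ![p.1, p.2.1, p.2.2.1, p.2.2.2]
      invFun := fun a => (a 0, a 1, a 2, a 3)
      left_inv := fun p => rfl
      right_inv := fun a => by funext i; fin_cases i <;> rfl }
  rw [← Fintype.sum_equiv e (fun p => g (e p 0) (e p 1) (e p 2) (e p 3))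
      (fun a => g (a 0) (a 1) (a 2) (a 3)) (fun p => rfl)]
  simp only [Fintype.sum_prod_type]
  rfl

lemma GA (p q : Fin n → Fin n → ℂ) :
    ∑ w, ∑ x, ∑ y, ∑ z, p w x * q y z = (∑ w, ∑ x, p w x) * (∑ y, ∑ z, q y z) := by
  simp only [← Finset.mul_sum, ← Finset.sum_mul]

lemma Ra (p q : Fin n → Fin n → Fin n → ℂ) :
    ∑ w, ∑ x, ∑ y, ∑ z, p w x y * q x y z
      = ∑ x, ∑ y, (∑ w, p w x y) * (∑ z, q x y z) := by
  rw [Finset.sum_comm]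
  refine Finset.sum_congr rfl fun x _ => ?_
  rw [Finset.sum_comm]
  refine Finset.sum_congr rfl fun y _ => ?_
  rw [Finset.sum_mul]
  refine Finset.sum_congr rfl fun w _ => ?_
  rw [Finset.mul_sum]

lemma Rb (p q : Fin n → Fin n → Fin n → ℂ) :
    ∑ w, ∑ x, ∑ y, ∑ z, p w x z * q x z y
      = ∑ x, ∑ z, (∑ w, p w x z) * (∑ y, q x z y) := by
  rw [Finset.sum_comm]
  refine Finset.sum_congr rfl fun x _ => ?_
  rw [show (∑ w, ∑ y, ∑ z, p w x z * q x z y) = ∑ w, ∑ z, ∑ y, p w x z * q x z y from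
    Finset.sum_congr rfl fun w _ => Finset.sum_comm]
  rw [Finset.sum_comm]
  refine Finset.sum_congr rfl fun z _ => ?_
  rw [Finset.sum_mul]
  refine Finset.sum_congr rfl fun w _ => ?_
  rw [Finset.mul_sum]

lemma Rc (p q : Fin n → Fin n → Fin n → ℂ) :
    ∑ w, ∑ x, ∑ y, ∑ z, p w x y * q w y z
      = ∑ w, ∑ y, (∑ x, p w x y) * (∑ z, q w y z) := by
  refine Finset.sum_congr rfl fun w _ => ?_
  rw [Finset.sum_comm]
  refine Finset.sum_congr rfl fun y _ => ?_
  rw [Finset.sum_mul]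
  refine Finset.sum_congr rfl fun x _ => ?_
  rw [Finset.mul_sum]

lemma Rd (p q : Fin n → Fin n → Fin n → ℂ) :
    ∑ w, ∑ x, ∑ y, ∑ z, p w x z * q w z y
      = ∑ w, ∑ z, (∑ x, p w x z) * (∑ y, q w z y) := by
  refine Finset.sum_congr rfl fun w _ => ?_
  rw [show (∑ x, ∑ y, ∑ z, p w x z * q w z y) = ∑ x, ∑ z, ∑ y, p w x z * q w z y from
    Finset.sum_congr rfl fun x _ => Finset.sum_comm]
  rw [Finset.sum_comm]
  refine Finset.sum_congr rfl fun z _ => ?_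
  rw [Finset.sum_mul]
  refine Finset.sum_congr rfl fun x _ => ?_
  rw [Finset.mul_sum]


/-- For the Hermitian endomorphism `f` of `V ⊗ V` associated to an algebraic Kähler
curvature tensor (so `σ f = f = f σ` and the partial traces `tr₁₃ f = tr₁₄ f = tr₂₃ f`
all equal the Ricci endomorphism `r`), one has
`tr((f ⊗ f) ∘ Π₄) = (1/24)(4|f|² + 16|r|² + 4 (tr f)²)`.
Everything is phrased in matrix form: `f` is a matrix indexed by `Fin n × Fin n`,
`F = f ⊗ f` is indexed by `Fin 4 → Fin n`, `W σ` is the permutation matrix of the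
factor-permutation `σ`, and `Π₄ = (1/24) ∑ σ, W σ`. -/
theorem stmt16
    (n : ℕ)
    (S : Matrix (Fin n × Fin n) (Fin n × Fin n) ℂ)
    (hS : ∀ p q, S p q = if p.1 = q.2 ∧ p.2 = q.1 then 1 else 0)
    (f : Matrix (Fin n × Fin n) (Fin n × Fin n) ℂ)
    (hf : f = fᴴ)
    (hSf : S * f = f) (hfS : f * S = f)
    (r : Matrix (Fin n) (Fin n) ℂ)
    (htr13 : ∀ k m, (∑ j, f (j, k) (j, m)) = r k m)
    (htr14 : ∀ k m, (∑ j, f (j, k) (m, j)) = r k m)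
    (htr23 : ∀ k m, (∑ j, f (k, j) (j, m)) = r k m)
    (F : Matrix (Fin 4 → Fin n) (Fin 4 → Fin n) ℂ)
    (hF : ∀ a b, F a b = f (a 0, a 1) (b 0, b 1) * f (a 2, a 3) (b 2, b 3))
    (W : Equiv.Perm (Fin 4) → Matrix (Fin 4 → Fin n) (Fin 4 → Fin n) ℂ)
    (hW : ∀ σ a b, W σ a b = if (∀ i, b i = a (σ i)) then 1 else 0)
    (P4 : Matrix (Fin 4 → Fin n) (Fin 4 → Fin n) ℂ)
    (hP4 : P4 = (24 : ℂ)⁻¹ • ∑ σ : Equiv.Perm (Fin 4), W σ) :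
    (F * P4).trace
      = (24 : ℂ)⁻¹ * (4 * (f * fᴴ).trace + 16 * (r * rᴴ).trace + 4 * f.trace ^ 2) := by
  have hcol : ∀ (p : Fin n × Fin n) (k l : Fin n), f p (l, k) = f p (k, l) := by
    intro p k l
    have h1 : (f * S) p (k, l) = f p (l, k) := by
      rw [Matrix.mul_apply]
      rw [Finset.sum_eq_single (l, k)]
      · rw [hS]; simp
      · intro q _ hq
        rw [hS, if_neg, mul_zero]
        exact fun hc => hq (Prod.ext hc.1 hc.2)
      · exact fun h => absurd (Finset.mem_univ _) h
    rw [← h1, hfS]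
  have c24 : ∀ k m, (∑ j, f (k, j) (m, j)) = r k m := by
    intro k m
    rw [show (∑ j, f (k, j) (m, j)) = ∑ j, f (k, j) (j, m) from
      Finset.sum_congr rfl fun j _ => hcol (k, j) j m]
    exact htr23 k m
  have hstar : ∀ p q, f p q = star (f q p) := by
    intro p q
    conv_lhs => rw [hf]
    simp [Matrix.conjTranspose_apply]
  have hr : rᴴ = r := by
    ext k m
    rw [Matrix.conjTranspose_apply, ← htr13 m k, ← htr13 k m, star_sum]
    exact Finset.sum_congr rfl fun j _ => (hstar (j, k) (j, m)).symm
  have S1 : (∑ w, ∑ x, f (w, x) (w, x)) = f.trace := by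
    simp only [Matrix.trace, Matrix.diag, Fintype.sum_prod_type]
  have TB : (∑ w, ∑ x, ∑ y, ∑ z, f (w, x) (y, z) * f (y, z) (w, x)) = (f * f).trace := by
    simp only [Matrix.trace, Matrix.diag, Matrix.mul_apply, Fintype.sum_prod_type]
  have TR : (∑ s, ∑ t, r s t * r t s) = (r * r).trace := by
    simp only [Matrix.trace, Matrix.diag, Matrix.mul_apply]
  have hTr : ∀ σ : Equiv.Perm (Fin 4), (F * W σ).trace
      = ∑ a : Fin 4 → Fin n,
          f (a 0, a 1) (a (σ⁻¹ 0), a (σ⁻¹ 1)) * f (a 2, a 3) (a (σ⁻¹ 2), a (σ⁻¹ 3)) := by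
    intro σ
    simp only [Matrix.trace, Matrix.diag]
    refine Finset.sum_congr rfl fun a _ => ?_
    rw [Matrix.mul_apply]
    rw [Finset.sum_eq_single (fun j => a (σ⁻¹ j))]
    · have hcond : ∀ i : Fin 4, a i = (fun j => a (σ⁻¹ j)) (σ i) := fun i => by
        show a i = a (σ⁻¹ (σ i))
        rw [show σ⁻¹ (σ i) = i from σ.symm_apply_apply i]
      rw [hF, hW, if_pos hcond, mul_one]
    · intro b _ hb
      rw [hW, if_neg, mul_zero]
      intro hc
      refine hb (funext fun j => ?_)
      have h2 := hc (σ⁻¹ j)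
      rw [show σ (σ⁻¹ j) = j from σ.apply_symm_apply j] at h2
      exact h2.symm
    · exact fun h => absurd (Finset.mem_univ _) h
  have hQ0123 : (∑ a : Fin 4 → Fin n, f (a 0, a 1) (a 0, a 1) * f (a 2, a 3) (a 2, a 3)) = f.trace ^ 2 := by
    simp only [pisum (fun w x y z => f (w, x) (w, x) * f (y, z) (y, z))]
    simp only [GA (fun w x => f (w, x) (w, x)) (fun y z => f (y, z) (y, z))]
    rw [S1]
    ring
  have hQ0213 : (∑ a : Fin 4 → Fin n, f (a 0, a 1) (a 0, a 2) * f (a 2, a 3) (a 1, a 3)) = (r * r).trace := by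
    simp only [pisum (fun w x y z => f (w, x) (w, y) * f (y, z) (x, z))]
    simp only [Ra (fun w x y => f (w, x) (w, y)) (fun x y z => f (y, z) (x, z))]
    refine Eq.trans (Finset.sum_congr rfl fun x _ => Finset.sum_congr rfl fun y _ => ?_) TR
    rw [htr13 x y, c24 y x]
  have hQ0312 : (∑ a : Fin 4 → Fin n, f (a 0, a 1) (a 0, a 3) * f (a 2, a 3) (a 1, a 2)) = (r * r).trace := by
    simp only [pisum (fun w x y z => f (w, x) (w, z) * f (y, z) (x, y))]
    simp only [Rb (fun w x z => f (w, x) (w, z)) (fun x z y => f (y, z) (x, y))]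
    refine Eq.trans (Finset.sum_congr rfl fun x _ => Finset.sum_congr rfl fun z _ => ?_) TR
    rw [htr13 x z, htr14 z x]
  have hQ1203 : (∑ a : Fin 4 → Fin n, f (a 0, a 1) (a 1, a 2) * f (a 2, a 3) (a 0, a 3)) = (r * r).trace := by
    simp only [pisum (fun w x y z => f (w, x) (x, y) * f (y, z) (w, z))]
    simp only [Rc (fun w x y => f (w, x) (x, y)) (fun w y z => f (y, z) (w, z))]
    refine Eq.trans (Finset.sum_congr rfl fun w _ => Finset.sum_congr rfl fun y _ => ?_) TR
    rw [htr23 w y, c24 y w]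
  have hQ1302 : (∑ a : Fin 4 → Fin n, f (a 0, a 1) (a 1, a 3) * f (a 2, a 3) (a 0, a 2)) = (r * r).trace := by
    simp only [pisum (fun w x y z => f (w, x) (x, z) * f (y, z) (w, y))]
    simp only [Rd (fun w x z => f (w, x) (x, z)) (fun w z y => f (y, z) (w, y))]
    refine Eq.trans (Finset.sum_congr rfl fun w _ => Finset.sum_congr rfl fun z _ => ?_) TR
    rw [htr23 w z, htr14 z w]
  have hQ2301 : (∑ a : Fin 4 → Fin n, f (a 0, a 1) (a 2, a 3) * f (a 2, a 3) (a 0, a 1)) = (f * f).trace := by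
    simp only [pisum (fun w x y z => f (w, x) (y, z) * f (y, z) (w, x))]
    exact TB
  have hQ0132 : (∑ a : Fin 4 → Fin n, f (a 0, a 1) (a 0, a 1) * f (a 2, a 3) (a 3, a 2)) = f.trace ^ 2 := by
    rw [show (∑ a : Fin 4 → Fin n, f (a 0, a 1) (a 0, a 1) * f (a 2, a 3) (a 3, a 2))
        = ∑ a : Fin 4 → Fin n, f (a 0, a 1) (a 0, a 1) * f (a 2, a 3) (a 2, a 3) from
      Finset.sum_congr rfl fun a _ => by rw [hcol (a 2, a 3) (a 2) (a 3)]]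
    exact hQ0123
  have hQ0231 : (∑ a : Fin 4 → Fin n, f (a 0, a 1) (a 0, a 2) * f (a 2, a 3) (a 3, a 1)) = (r * r).trace := by
    rw [show (∑ a : Fin 4 → Fin n, f (a 0, a 1) (a 0, a 2) * f (a 2, a 3) (a 3, a 1))
        = ∑ a : Fin 4 → Fin n, f (a 0, a 1) (a 0, a 2) * f (a 2, a 3) (a 1, a 3) from
      Finset.sum_congr rfl fun a _ => by rw [hcol (a 2, a 3) (a 1) (a 3)]]
    exact hQ0213
  have hQ0321 : (∑ a : Fin 4 → Fin n, f (a 0, a 1) (a 0, a 3) * f (a 2, a 3) (a 2, a 1)) = (r * r).trace := by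
    rw [show (∑ a : Fin 4 → Fin n, f (a 0, a 1) (a 0, a 3) * f (a 2, a 3) (a 2, a 1))
        = ∑ a : Fin 4 → Fin n, f (a 0, a 1) (a 0, a 3) * f (a 2, a 3) (a 1, a 2) from
      Finset.sum_congr rfl fun a _ => by rw [hcol (a 2, a 3) (a 1) (a 2)]]
    exact hQ0312
  have hQ1023 : (∑ a : Fin 4 → Fin n, f (a 0, a 1) (a 1, a 0) * f (a 2, a 3) (a 2, a 3)) = f.trace ^ 2 := by
    rw [show (∑ a : Fin 4 → Fin n, f (a 0, a 1) (a 1, a 0) * f (a 2, a 3) (a 2, a 3))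
        = ∑ a : Fin 4 → Fin n, f (a 0, a 1) (a 0, a 1) * f (a 2, a 3) (a 2, a 3) from
      Finset.sum_congr rfl fun a _ => by rw [hcol (a 0, a 1) (a 0) (a 1)]]
    exact hQ0123
  have hQ1032 : (∑ a : Fin 4 → Fin n, f (a 0, a 1) (a 1, a 0) * f (a 2, a 3) (a 3, a 2)) = f.trace ^ 2 := by
    rw [show (∑ a : Fin 4 → Fin n, f (a 0, a 1) (a 1, a 0) * f (a 2, a 3) (a 3, a 2))
        = ∑ a : Fin 4 → Fin n, f (a 0, a 1) (a 0, a 1) * f (a 2, a 3) (a 2, a 3) from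
      Finset.sum_congr rfl fun a _ => by rw [hcol (a 0, a 1) (a 0) (a 1), hcol (a 2, a 3) (a 2) (a 3)]]
    exact hQ0123
  have hQ1230 : (∑ a : Fin 4 → Fin n, f (a 0, a 1) (a 1, a 2) * f (a 2, a 3) (a 3, a 0)) = (r * r).trace := by
    rw [show (∑ a : Fin 4 → Fin n, f (a 0, a 1) (a 1, a 2) * f (a 2, a 3) (a 3, a 0))
        = ∑ a : Fin 4 → Fin n, f (a 0, a 1) (a 1, a 2) * f (a 2, a 3) (a 0, a 3) from
      Finset.sum_congr rfl fun a _ => by rw [hcol (a 2, a 3) (a 0) (a 3)]]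
    exact hQ1203
  have hQ1320 : (∑ a : Fin 4 → Fin n, f (a 0, a 1) (a 1, a 3) * f (a 2, a 3) (a 2, a 0)) = (r * r).trace := by
    rw [show (∑ a : Fin 4 → Fin n, f (a 0, a 1) (a 1, a 3) * f (a 2, a 3) (a 2, a 0))
        = ∑ a : Fin 4 → Fin n, f (a 0, a 1) (a 1, a 3) * f (a 2, a 3) (a 0, a 2) from
      Finset.sum_congr rfl fun a _ => by rw [hcol (a 2, a 3) (a 0) (a 2)]]
    exact hQ1302
  have hQ2013 : (∑ a : Fin 4 → Fin n, f (a 0, a 1) (a 2, a 0) * f (a 2, a 3) (a 1, a 3)) = (r * r).trace := by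
    rw [show (∑ a : Fin 4 → Fin n, f (a 0, a 1) (a 2, a 0) * f (a 2, a 3) (a 1, a 3))
        = ∑ a : Fin 4 → Fin n, f (a 0, a 1) (a 0, a 2) * f (a 2, a 3) (a 1, a 3) from
      Finset.sum_congr rfl fun a _ => by rw [hcol (a 0, a 1) (a 0) (a 2)]]
    exact hQ0213
  have hQ2031 : (∑ a : Fin 4 → Fin n, f (a 0, a 1) (a 2, a 0) * f (a 2, a 3) (a 3, a 1)) = (r * r).trace := by
    rw [show (∑ a : Fin 4 → Fin n, f (a 0, a 1) (a 2, a 0) * f (a 2, a 3) (a 3, a 1))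
        = ∑ a : Fin 4 → Fin n, f (a 0, a 1) (a 0, a 2) * f (a 2, a 3) (a 1, a 3) from
      Finset.sum_congr rfl fun a _ => by rw [hcol (a 0, a 1) (a 0) (a 2), hcol (a 2, a 3) (a 1) (a 3)]]
    exact hQ0213
  have hQ2103 : (∑ a : Fin 4 → Fin n, f (a 0, a 1) (a 2, a 1) * f (a 2, a 3) (a 0, a 3)) = (r * r).trace := by
    rw [show (∑ a : Fin 4 → Fin n, f (a 0, a 1) (a 2, a 1) * f (a 2, a 3) (a 0, a 3))
        = ∑ a : Fin 4 → Fin n, f (a 0, a 1) (a 1, a 2) * f (a 2, a 3) (a 0, a 3) from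
      Finset.sum_congr rfl fun a _ => by rw [hcol (a 0, a 1) (a 1) (a 2)]]
    exact hQ1203
  have hQ2130 : (∑ a : Fin 4 → Fin n, f (a 0, a 1) (a 2, a 1) * f (a 2, a 3) (a 3, a 0)) = (r * r).trace := by
    rw [show (∑ a : Fin 4 → Fin n, f (a 0, a 1) (a 2, a 1) * f (a 2, a 3) (a 3, a 0))
        = ∑ a : Fin 4 → Fin n, f (a 0, a 1) (a 1, a 2) * f (a 2, a 3) (a 0, a 3) from
      Finset.sum_congr rfl fun a _ => by rw [hcol (a 0, a 1) (a 1) (a 2), hcol (a 2, a 3) (a 0) (a 3)]]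
    exact hQ1203
  have hQ2310 : (∑ a : Fin 4 → Fin n, f (a 0, a 1) (a 2, a 3) * f (a 2, a 3) (a 1, a 0)) = (f * f).trace := by
    rw [show (∑ a : Fin 4 → Fin n, f (a 0, a 1) (a 2, a 3) * f (a 2, a 3) (a 1, a 0))
        = ∑ a : Fin 4 → Fin n, f (a 0, a 1) (a 2, a 3) * f (a 2, a 3) (a 0, a 1) from
      Finset.sum_congr rfl fun a _ => by rw [hcol (a 2, a 3) (a 0) (a 1)]]
    exact hQ2301
  have hQ3012 : (∑ a : Fin 4 → Fin n, f (a 0, a 1) (a 3, a 0) * f (a 2, a 3) (a 1, a 2)) = (r * r).trace := by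
    rw [show (∑ a : Fin 4 → Fin n, f (a 0, a 1) (a 3, a 0) * f (a 2, a 3) (a 1, a 2))
        = ∑ a : Fin 4 → Fin n, f (a 0, a 1) (a 0, a 3) * f (a 2, a 3) (a 1, a 2) from
      Finset.sum_congr rfl fun a _ => by rw [hcol (a 0, a 1) (a 0) (a 3)]]
    exact hQ0312
  have hQ3021 : (∑ a : Fin 4 → Fin n, f (a 0, a 1) (a 3, a 0) * f (a 2, a 3) (a 2, a 1)) = (r * r).trace := by
    rw [show (∑ a : Fin 4 → Fin n, f (a 0, a 1) (a 3, a 0) * f (a 2, a 3) (a 2, a 1))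
        = ∑ a : Fin 4 → Fin n, f (a 0, a 1) (a 0, a 3) * f (a 2, a 3) (a 1, a 2) from
      Finset.sum_congr rfl fun a _ => by rw [hcol (a 0, a 1) (a 0) (a 3), hcol (a 2, a 3) (a 1) (a 2)]]
    exact hQ0312
  have hQ3102 : (∑ a : Fin 4 → Fin n, f (a 0, a 1) (a 3, a 1) * f (a 2, a 3) (a 0, a 2)) = (r * r).trace := by
    rw [show (∑ a : Fin 4 → Fin n, f (a 0, a 1) (a 3, a 1) * f (a 2, a 3) (a 0, a 2))
        = ∑ a : Fin 4 → Fin n, f (a 0, a 1) (a 1, a 3) * f (a 2, a 3) (a 0, a 2) from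
      Finset.sum_congr rfl fun a _ => by rw [hcol (a 0, a 1) (a 1) (a 3)]]
    exact hQ1302
  have hQ3120 : (∑ a : Fin 4 → Fin n, f (a 0, a 1) (a 3, a 1) * f (a 2, a 3) (a 2, a 0)) = (r * r).trace := by
    rw [show (∑ a : Fin 4 → Fin n, f (a 0, a 1) (a 3, a 1) * f (a 2, a 3) (a 2, a 0))
        = ∑ a : Fin 4 → Fin n, f (a 0, a 1) (a 1, a 3) * f (a 2, a 3) (a 0, a 2) from
      Finset.sum_congr rfl fun a _ => by rw [hcol (a 0, a 1) (a 1) (a 3), hcol (a 2, a 3) (a 0) (a 2)]]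
    exact hQ1302
  have hQ3201 : (∑ a : Fin 4 → Fin n, f (a 0, a 1) (a 3, a 2) * f (a 2, a 3) (a 0, a 1)) = (f * f).trace := by
    rw [show (∑ a : Fin 4 → Fin n, f (a 0, a 1) (a 3, a 2) * f (a 2, a 3) (a 0, a 1))
        = ∑ a : Fin 4 → Fin n, f (a 0, a 1) (a 2, a 3) * f (a 2, a 3) (a 0, a 1) from
      Finset.sum_congr rfl fun a _ => by rw [hcol (a 0, a 1) (a 2) (a 3)]]
    exact hQ2301
  have hQ3210 : (∑ a : Fin 4 → Fin n, f (a 0, a 1) (a 3, a 2) * f (a 2, a 3) (a 1, a 0)) = (f * f).trace := by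
    rw [show (∑ a : Fin 4 → Fin n, f (a 0, a 1) (a 3, a 2) * f (a 2, a 3) (a 1, a 0))
        = ∑ a : Fin 4 → Fin n, f (a 0, a 1) (a 2, a 3) * f (a 2, a 3) (a 0, a 1) from
      Finset.sum_congr rfl fun a _ => by rw [hcol (a 0, a 1) (a 2) (a 3), hcol (a 2, a 3) (a 0) (a 1)]]
    exact hQ2301
  rw [← hf, hr]
  rw [hP4, Matrix.mul_smul, Matrix.trace_smul, Matrix.mul_sum, Matrix.trace_sum, smul_eq_mul]
  congr 1
  rw [perm_sum (fun σ => (F * W σ).trace)]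
  simp only [hTr]
  simp only [q0123_inv_0, q0123_inv_1, q0123_inv_2, q0123_inv_3, q0132_inv_0, q0132_inv_1, q0132_inv_2, q0132_inv_3, q0213_inv_0, q0213_inv_1, q0213_inv_2, q0213_inv_3, q0231_inv_0, q0231_inv_1, q0231_inv_2, q0231_inv_3, q0312_inv_0, q0312_inv_1, q0312_inv_2, q0312_inv_3, q0321_inv_0, q0321_inv_1, q0321_inv_2, q0321_inv_3, q1023_inv_0, q1023_inv_1, q1023_inv_2, q1023_inv_3, q1032_inv_0, q1032_inv_1, q1032_inv_2, q1032_inv_3, q1203_inv_0, q1203_inv_1, q1203_inv_2, q1203_inv_3, q1230_inv_0, q1230_inv_1, q1230_inv_2, q1230_inv_3, q1302_inv_0, q1302_inv_1, q1302_inv_2, q1302_inv_3, q1320_inv_0, q1320_inv_1, q1320_inv_2, q1320_inv_3, q2013_inv_0, q2013_inv_1, q2013_inv_2, q2013_inv_3, q2031_inv_0, q2031_inv_1, q2031_inv_2, q2031_inv_3, q2103_inv_0, q2103_inv_1, q2103_inv_2, q2103_inv_3, q2130_inv_0, q2130_inv_1, q2130_inv_2, q2130_inv_3, q2301_inv_0,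 q2301_inv_1, q2301_inv_2, q2301_inv_3, q2310_inv_0, q2310_inv_1, q2310_inv_2, q2310_inv_3, q3012_inv_0, q3012_inv_1, q3012_inv_2, q3012_inv_3, q3021_inv_0, q3021_inv_1, q3021_inv_2, q3021_inv_3, q3102_inv_0, q3102_inv_1, q3102_inv_2, q3102_inv_3, q3120_inv_0, q3120_inv_1, q3120_inv_2, q3120_inv_3, q3201_inv_0, q3201_inv_1, q3201_inv_2, q3201_inv_3, q3210_inv_0, q3210_inv_1, q3210_inv_2, q3210_inv_3]
  rw [hQ0123, hQ0132, hQ0213, hQ0312, hQ0231, hQ0321, hQ1023, hQ1032, hQ2013, hQ3012, hQ2031, hQ3021, hQ1203, hQ1302, hQ2103, hQ3102, hQ2301, hQ3201, hQ1230, hQ1320, hQ2130, hQ3120, hQ2310, hQ3210]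
  ring
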